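/- arXiv:1103.2459 — 4 statements merged into one kernel-verified Lean document; each statement's English description precedes it below -/
import Mathlib

section
/- Let K be a field of characteristic p ≥ 0, S = K[x_1, …, x_ℓ], and let f = α_1 ⋯ α_n be a product of pairwise non-proportional nonzero linear forms (a central hyperplane arrangement). Let a ∈ K^ℓ with f(a) = 0, set k = #{i : α_i(a) = 0}, and suppose p does not divide k. Then, with m_a = (x_1 − a_1, …, x_ℓ − a_ℓ) the maximal ideal at a, there exist a K-linear derivation θ of the localization S_{m_a} and an element g ∈ S_{m_a} generating the ideal f·S_{m_a} such that θ(g) = g; concretely, g = ∏_{i : α_i(a)=0} α_i generates f·S_{m_a} and the derivation θ = (1/k) Σ_j (x_j − a_j) ∂/∂x_j satisfies θ(g) = g. (That is, a hyperplane arrangement over a field of good characteristic is an Euler-homogeneous divisor.) -/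
/-!
The translated Euler derivation `E = Σ_j (x_j - a_j) ∂/∂x_j` sends every linear form `α` with
`α(a) = 0` to itself, so by the Leibniz rule it multiplies the product `g` of the `k` hyperplanes
through `a` by `k`; hence `θ = E / k` is an Euler vector field for `g` when `p ∤ k`.  The other
factors of `f` do not vanish at `a`, so they are units of `S_{m_a}` and `g` generates `f·S_{m_a}`.
Finally `S → S_{m_a}` is formally étale, so `Ω_{S_{m_a}} = S_{m_a} ⊗_S Ω_S` and every derivation
of `S` extends to `S_{m_a}`.
-/

open MvPolynomial

/-- The multiplicative set of polynomials not vanishing at the point `a`; this is the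
complement of the maximal ideal `m_a = (x_1 - a_1, …, x_ℓ - a_ℓ)`, so that localizing at it
gives the local ring `S_{m_a}`. -/
def nonvanishingAt (K : Type) [Field K] (ℓ : ℕ) (a : Fin ℓ → K) :
    Submonoid (MvPolynomial (Fin ℓ) K) where
  carrier := {s | eval a s ≠ 0}
  mul_mem' := fun {x y} hx hy => by
    simpa using mul_ne_zero hx hy
  one_mem' := by simp

open KaehlerDifferential

namespace Derivation

section FormallyEtale

variable {R A T : Type*} [CommRing R] [CommRing A] [CommRing T] [Algebra R A] [Algebra R T]
  [Algebra A T] [IsScalarTower R A T] [Algebra.FormallyEtale A T]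

noncomputable def extendOfFormallyEtale (D : Derivation R A A) : Derivation R T T :=
  (((Algebra.linearMap A T ∘ₗ D.liftKaehlerDifferential).liftBaseChange T) ∘ₗ
    (tensorKaehlerEquivOfFormallyEtale R A T).symm.toLinearMap).compDer (KaehlerDifferential.D R T)

theorem extendOfFormallyEtale_algebraMap (D : Derivation R A A) (x : A) :
    D.extendOfFormallyEtale (algebraMap A T x) = algebraMap A T (D x) := by
  simp [extendOfFormallyEtale, tensorKaehlerEquivOfFormallyEtale_symm_D_algebraMap]

end FormallyEtale

theorem map_prod_of_forall_eq_self {R A ι : Type*} [CommRing R] [CommRing A] [Algebra R A]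
    (D : Derivation R A A) (s : Finset ι) (b : ι → A) (h : ∀ i ∈ s, D (b i) = b i) :
    D (∏ i ∈ s, b i) = s.card • ∏ i ∈ s, b i := by
  classical
  induction s using Finset.induction_on with
  | empty => simp
  | insert x s hx ih =>
    rw [Finset.prod_insert hx, leibniz, ih fun i hi => h i (Finset.mem_insert_of_mem hi),
      h x (Finset.mem_insert_self x s), Finset.card_insert_of_notMem hx, smul_eq_mul, smul_eq_mul,
      mul_smul_comm, mul_comm, succ_nsmul]

end Derivation

namespace MvPolynomial

variable {R σ : Type*} [CommRing R] [Fintype σ]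

noncomputable def eulerAt (a : σ → R) : Derivation R (MvPolynomial σ R) (MvPolynomial σ R) :=
  ∑ j, (X j - C (a j)) • pderiv j

theorem eulerAt_apply (a : σ → R) (φ : MvPolynomial σ R) :
    eulerAt a φ = ∑ j, (X j - C (a j)) * pderiv j φ := by
  rw [eulerAt, ← Derivation.coeFnAddMonoidHom_apply, map_sum, Finset.sum_apply]
  rfl

theorem IsHomogeneous.eulerAt_eq_sub_C_eval {φ : MvPolynomial σ R} (h : φ.IsHomogeneous 1)
    (a : σ → R) : eulerAt a φ = φ - C (eval a φ) := by
  set c : σ → R := fun j => coeff 0 (pderiv j φ)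
  have hconst (j : σ) : pderiv j φ = C (c j) :=
    totalDegree_eq_zero_iff_eq_C.1 (Nat.le_zero.1 (h.pderiv (i := j)).totalDegree_le)
  have euler : ∑ j, X j * C (c j) = φ := by
    simpa [← hconst] using h.sum_X_mul_pderiv
  rw [eulerAt_apply]
  simp only [hconst]
  conv_rhs => rw [← euler]
  simp [sub_mul, Finset.sum_sub_distrib]

theorem eulerAt_prod_of_eval_eq_zero {ι : Type*} (a : σ → R) (s : Finset ι)
    (α : ι → MvPolynomial σ R) (hlin : ∀ i ∈ s, (α i).IsHomogeneous 1)
    (hvan : ∀ i ∈ s, eval a (α i) = 0) :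
    eulerAt a (∏ i ∈ s, α i) = s.card • ∏ i ∈ s, α i :=
  (eulerAt a).map_prod_of_forall_eq_self s α fun i hi => by
    rw [(hlin i hi).eulerAt_eq_sub_C_eval, hvan i hi, map_zero, sub_zero]

end MvPolynomial

open Classical in
theorem arrangement_euler_homogeneous_general (K : Type) [Field K] (ℓ n : ℕ)
    (α : Fin n → MvPolynomial (Fin ℓ) K)
    (hlin : ∀ i, α i ≠ 0 ∧ (α i).IsHomogeneous 1)
    (f : MvPolynomial (Fin ℓ) K) (hf : f = ∏ i, α i)
    (a : Fin ℓ → K)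
    (k : ℕ) (hk : k = (Finset.univ.filter fun i => eval a (α i) = 0).card)
    (hchar : ¬ (ringChar K ∣ k)) :
    Ideal.span {algebraMap (MvPolynomial (Fin ℓ) K) (Localization (nonvanishingAt K ℓ a)) f} =
      Ideal.span {algebraMap (MvPolynomial (Fin ℓ) K) (Localization (nonvanishingAt K ℓ a))
        (∏ i ∈ Finset.univ.filter fun i => eval a (α i) = 0, α i)} ∧
    ∃ θ : Derivation K (Localization (nonvanishingAt K ℓ a))
        (Localization (nonvanishingAt K ℓ a)),
      (∀ s : MvPolynomial (Fin ℓ) K,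
        θ (algebraMap (MvPolynomial (Fin ℓ) K) (Localization (nonvanishingAt K ℓ a)) s) =
        algebraMap (MvPolynomial (Fin ℓ) K) (Localization (nonvanishingAt K ℓ a))
          (((k : K)⁻¹) • ∑ j, (X j - C (a j)) * pderiv j s)) ∧
      θ (algebraMap (MvPolynomial (Fin ℓ) K) (Localization (nonvanishingAt K ℓ a))
          (∏ i ∈ Finset.univ.filter fun i => eval a (α i) = 0, α i)) =
        algebraMap (MvPolynomial (Fin ℓ) K) (Localization (nonvanishingAt K ℓ a))
          (∏ i ∈ Finset.univ.filter fun i => eval a (α i) = 0, α i) := by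
  have hcofactor : (∏ i ∈ Finset.univ.filter fun i => eval a (α i) ≠ 0, α i) ∈
      nonvanishingAt K ℓ a := by
    simp [nonvanishingAt, Finset.prod_ne_zero_iff]
  have hk0 : (k : K) ≠ 0 := fun h => hchar ((CharP.cast_eq_zero_iff K (ringChar K) k).1 h)
  refine ⟨?_, ((k : K)⁻¹ • eulerAt a).extendOfFormallyEtale, fun s => ?_, ?_⟩
  · rw [hf, ← Finset.prod_filter_mul_prod_filter_not Finset.univ fun i => eval a (α i) = 0,
      map_mul]
    exact Ideal.span_singleton_mul_right_unit
      (IsLocalization.map_units (Localization (nonvanishingAt K ℓ a)) ⟨_, hcofactor⟩) _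
  · rw [Derivation.extendOfFormallyEtale_algebraMap, Derivation.smul_apply, eulerAt_apply]
  · rw [Derivation.extendOfFormallyEtale_algebraMap, Derivation.smul_apply,
      eulerAt_prod_of_eval_eq_zero a _ α (fun i _ => (hlin i).2)
        (fun i hi => (Finset.mem_filter.1 hi).2), ← hk, ← Nat.cast_smul_eq_nsmul K, smul_smul,
      inv_mul_cancel₀ hk0, one_smul]

open Classical in
/-- Let `K` be a field of characteristic `p ≥ 0`, `S = K[x_1, …, x_ℓ]`, and
`f = α_1 ⋯ α_n` a product of pairwise non-proportional nonzero linear forms.  Let `a ∈ K^ℓ`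
with `f(a) = 0`, let `k = #{i : α_i(a) = 0}`, and suppose `p ∤ k`.  Then, in the localization
`S_{m_a}`, the element `g = ∏_{i : α_i(a) = 0} α_i` generates the ideal `f·S_{m_a}`, and
there is a `K`-linear derivation `θ` of `S_{m_a}`, given on `S` by
`θ = (1/k) Σ_j (x_j - a_j) ∂/∂x_j`, with `θ(g) = g`.  (A hyperplane arrangement in good
characteristic is Euler homogeneous.) -/
theorem arrangement_euler_homogeneous (K : Type) [Field K] (ℓ n : ℕ)
    (α : Fin n → MvPolynomial (Fin ℓ) K)
    (hlin : ∀ i, α i ≠ 0 ∧ (α i).IsHomogeneous 1)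
    (hprop : ∀ i j, i ≠ j → ∀ c : K, α j ≠ c • α i)
    (f : MvPolynomial (Fin ℓ) K) (hf : f = ∏ i, α i)
    (a : Fin ℓ → K) (ha : eval a f = 0)
    (k : ℕ) (hk : k = (Finset.univ.filter fun i => eval a (α i) = 0).card)
    (hchar : ¬ (ringChar K ∣ k)) :
    Ideal.span {algebraMap (MvPolynomial (Fin ℓ) K) (Localization (nonvanishingAt K ℓ a)) f} =
      Ideal.span {algebraMap (MvPolynomial (Fin ℓ) K) (Localization (nonvanishingAt K ℓ a))
        (∏ i ∈ Finset.univ.filter fun i => eval a (α i) = 0, α i)} ∧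
    ∃ θ : Derivation K (Localization (nonvanishingAt K ℓ a))
        (Localization (nonvanishingAt K ℓ a)),
      (∀ s : MvPolynomial (Fin ℓ) K,
        θ (algebraMap (MvPolynomial (Fin ℓ) K) (Localization (nonvanishingAt K ℓ a)) s) =
        algebraMap (MvPolynomial (Fin ℓ) K) (Localization (nonvanishingAt K ℓ a))
          (((k : K)⁻¹) • ∑ j, (X j - C (a j)) * pderiv j s)) ∧
      θ (algebraMap (MvPolynomial (Fin ℓ) K) (Localization (nonvanishingAt K ℓ a))
          (∏ i ∈ Finset.univ.filter fun i => eval a (α i) = 0, α i)) =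
        algebraMap (MvPolynomial (Fin ℓ) K) (Localization (nonvanishingAt K ℓ a))
          (∏ i ∈ Finset.univ.filter fun i => eval a (α i) = 0, α i) :=
  arrangement_euler_homogeneous_general K ℓ n α hlin f hf a k hk hchar
end

section
/- For n ≥ 4, the Laurent polynomial (n−3)t^{−1} + (1−n) + (n−1)t^{n−3} + (3−n)t^{n−2} ∈ ℤ[t, t^{−1}] is divisible by (1−t)^3 in ℤ[t, t^{−1}], and the quotient q_n(t) = ((n−3)t^{−1} + (1−n) + (n−1)t^{n−3} + (3−n)t^{n−2})/(1−t)^3 satisfies q_n(1) = C(n−1, 3). (This is the statement that the Hilbert series q_n(t) of Ext^1_S(Ω^1_0(A), S) for a generic rank-3 arrangement of n hyperplanes is a Laurent polynomial whose total value, the length of the module, equals C(n−1, 3).) -/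
/-!
Multiplying by `t`, the numerator becomes the polynomial
`(m+1) - (m+3) t + (m+3) t^(m+2) - (m+1) t^(m+3)` with `m = n - 4`. Its quotient by `(1-t)³` is
`Σ_{j ≤ m} Σ_{k ≤ j} (k+1) tᵏ`: the inner sums are the quotients of
`1 - (j+2) t^(j+1) + (j+1) t^(j+2)` by `(1-t)²`, and both identities follow by induction. At `t = 1`
the inner sum is `C(j+2, 2)`, and the hockey-stick identity sums these to `C(m+3, 3)`.
-/

open LaurentPolynomial

/-- Evaluation of a Laurent polynomial at `1`: the ring homomorphism
`ℤ[T;T⁻¹] → ℤ` sending `T ↦ 1` (i.e. the sum of the coefficients). -/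
noncomputable def laurentEvalOne : ℤ[T;T⁻¹] →ₐ[ℤ] ℤ :=
  (AddMonoidAlgebra.lift ℤ ℤ ℤ) 1

open Finset

section Quotient

variable {R : Type*} [CommRing R]

def hilbertQuotient (m : ℕ) (x : R) : R :=
  ∑ j ∈ range (m + 1), ∑ k ∈ range (j + 1), ((k : R) + 1) * x ^ k

theorem one_sub_sq_mul_sum_range_succ_mul_pow (j : ℕ) (x : R) :
    (1 - x) ^ 2 * ∑ k ∈ range (j + 1), ((k : R) + 1) * x ^ k =
      1 - ((j : R) + 2) * x ^ (j + 1) + ((j : R) + 1) * x ^ (j + 2) := by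
  induction j with
  | zero =>
    simp only [zero_add, range_one, sum_singleton, Nat.cast_zero, pow_zero, mul_one, pow_one,
      one_mul]
    ring
  | succ j ih =>
    rw [sum_range_succ, mul_add, ih]
    push_cast
    ring

theorem one_sub_pow_three_mul_hilbertQuotient (m : ℕ) (x : R) :
    (1 - x) ^ 3 * hilbertQuotient m x =
      ((m : R) + 1) - ((m : R) + 3) * x + ((m : R) + 3) * x ^ (m + 2)
        - ((m : R) + 1) * x ^ (m + 3) := by
  induction m with
  | zero =>
    simp only [hilbertQuotient, zero_add, range_one, sum_singleton, Nat.cast_zero, pow_zero,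
      mul_one, one_mul]
    ring
  | succ m ih =>
    rw [hilbertQuotient, sum_range_succ, mul_add, ← hilbertQuotient, ih]
    have h := one_sub_sq_mul_sum_range_succ_mul_pow (m + 1) x
    push_cast at h ⊢
    linear_combination (1 - x) * h

theorem hilbertQuotient_one (m : ℕ) : hilbertQuotient m (1 : R) = ((m + 3).choose 3 : R) := by
  have inner (j : ℕ) : ∑ k ∈ range (j + 1), (k + 1).choose 1 = (j + 2).choose 2 :=
    Nat.sum_range_add_choose j 1
  have outer : ∑ j ∈ range (m + 1), (j + 2).choose 2 = (m + 3).choose 3 :=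
    Nat.sum_range_add_choose m 2
  simp only [hilbertQuotient, one_pow, mul_one, ← outer, ← inner, Nat.choose_one_right]
  push_cast
  rfl

theorem map_hilbertQuotient {S F : Type*} [CommRing S] [FunLike F R S] [RingHomClass F R S]
    (f : F) (m : ℕ) (x : R) : f (hilbertQuotient m x) = hilbertQuotient m (f x) := by
  simp [hilbertQuotient, map_sum]

end Quotient

theorem laurentEvalOne_T (k : ℤ) : laurentEvalOne (T k) = 1 := by
  rw [laurentEvalOne, LaurentPolynomial.T, AddMonoidAlgebra.lift_single]
  simp

/-- For `n ≥ 4`, the Laurent polynomial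
`(n-3)t⁻¹ + (1-n) + (n-1)t^{n-3} + (3-n)t^{n-2}` is divisible by `(1-t)³` in `ℤ[t, t⁻¹]`,
and the quotient `q_n(t)` satisfies `q_n(1) = C(n-1, 3)`. -/
theorem laurent_hilbert_series_length (n : ℕ) (hn : 4 ≤ n) :
    ∃ q : ℤ[T;T⁻¹],
      C ((n : ℤ) - 3) * T (-1) + C (1 - (n : ℤ)) + C ((n : ℤ) - 1) * T ((n : ℤ) - 3)
          + C (3 - (n : ℤ)) * T ((n : ℤ) - 2) =
        (1 - T 1) ^ 3 * q ∧
      laurentEvalOne q = (n - 1).choose 3 := by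
  obtain ⟨m, rfl⟩ : ∃ m, n = m + 4 := ⟨n - 4, by omega⟩
  refine ⟨T (-1) * hilbertQuotient m (T 1), ?_, ?_⟩
  · have hT (j : ℕ) : (T (-1 + j) : ℤ[T;T⁻¹]) = T (-1) * T 1 ^ j := by
      rw [T_add, T_pow, mul_one]
    have hT_inv : (T 1 * T (-1) : ℤ[T;T⁻¹]) = 1 := by rw [← T_add]; rfl
    rw [show ((m + 4 : ℕ) : ℤ) - 3 = -1 + (m + 2 : ℕ) by push_cast; ring,
      show ((m + 4 : ℕ) : ℤ) - 2 = -1 + (m + 3 : ℕ) by push_cast; ring, hT, hT]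
    simp only [map_add, map_neg, map_sub, map_natCast, map_one, map_ofNat]
    push_cast
    linear_combination (-T (-1)) * one_sub_pow_three_mul_hilbertQuotient m (T 1 : ℤ[T;T⁻¹])
      + ((m : ℤ[T;T⁻¹]) + 3) * hT_inv
  · rw [map_mul, map_hilbertQuotient, laurentEvalOne_T, laurentEvalOne_T, hilbertQuotient_one]
    simp
end

section
/- Define, for integers p ≥ 1 and ℓ ≥ p + 2, the rational function Q(ℓ, p) = t^{−p} s^{ℓ+1} / ((1−s)^{p+1}(1−st)^{ℓ−p}) ∈ ℚ(s, t). Let T ∈ ℚ(s,t)[[u, v]] be the formal power series in u and v over the field ℚ(s, t) whose coefficient of u^ℓ v^p equals Q(ℓ, p) when p ≥ 1 and ℓ ≥ p + 2, and equals 0 otherwise. Then T · (1−s)(1−st) · ((1−st) − su) · ((t−st) − suv) = s^4 u^3 v; equivalently, T = s^4 u^3 v / ((1−s)(1−st)(1−st−su)(t−st−suv)). -/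
/-- The field `ℚ(s, t)` of rational functions in two variables over `ℚ`. -/
noncomputable abbrev QQst : Type := FractionRing (MvPolynomial (Fin 2) ℚ)

/-- The variable `s` of `ℚ(s, t)`. -/
noncomputable def svar : QQst := algebraMap (MvPolynomial (Fin 2) ℚ) QQst (MvPolynomial.X 0)

/-- The variable `t` of `ℚ(s, t)`. -/
noncomputable def tvar : QQst := algebraMap (MvPolynomial (Fin 2) ℚ) QQst (MvPolynomial.X 1)

/-- `Q(ℓ, p) = t^{-p} s^{ℓ+1} / ((1-s)^{p+1} (1-st)^{ℓ-p}) ∈ ℚ(s, t)`. -/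
noncomputable def Qlp (l p : ℕ) : QQst :=
  tvar⁻¹ ^ p * svar ^ (l + 1) / ((1 - svar) ^ (p + 1) * (1 - svar * tvar) ^ (l - p))

/-- The formal power series `T ∈ ℚ(s,t)[[u, v]]` whose coefficient of `u^ℓ v^p` is
`Q(ℓ, p)` when `p ≥ 1` and `ℓ ≥ p + 2`, and `0` otherwise (the first variable is `u`,
the second is `v`). -/
noncomputable def Tser : MvPowerSeries (Fin 2) QQst :=
  fun e => if 1 ≤ e 1 ∧ e 1 + 2 ≤ e 0 then Qlp (e 0) (e 1) else 0

/-!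
The coefficients satisfy `(1 - st) Q(ℓ+1, p) = s Q(ℓ, p)` and `(t - st) Q(ℓ+1, p+1) = s Q(ℓ, p)`.
Multiplying `T` by `(1 - st) - su` therefore kills every coefficient except those with
`ℓ = p + 2`, and multiplying the result by `(t - st) - suv` kills all of these but
the single term `(1 - st)(t - st) Q(3, 1) u³v`, and `(1 - s)(1 - st)(1 - st)(t - st) Q(3, 1) = s⁴`.
-/

open MvPowerSeries

theorem MvPowerSeries.coeff_mul_C_sub_C_mul_monomial {σ R : Type*} [CommRing R]
    (f : MvPowerSeries σ R) (a b : R) (n e : σ →₀ ℕ) :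
    coeff e (f * (C a - C b * monomial n 1)) =
      a * coeff e f - if n ≤ e then b * coeff (e - n) f else 0 := by
  rw [← monomial_zero_eq_C_apply b, monomial_mul_monomial, zero_add, mul_one, mul_sub, map_sub,
    coeff_mul_C, coeff_mul_monomial, mul_comm (coeff e f)]
  split_ifs <;> simp only [mul_comm]

theorem Finsupp.le_iff_fin_two {α : Type*} [Zero α] [LE α] (n e : Fin 2 →₀ α) :
    n ≤ e ↔ n 0 ≤ e 0 ∧ n 1 ≤ e 1 := by
  rw [Finsupp.le_def, Fin.forall_fin_two]

theorem Finsupp.eq_iff_fin_two {α : Type*} [Zero α] (e n : Fin 2 →₀ α) :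
    e = n ↔ e 0 = n 0 ∧ e 1 = n 1 := by
  rw [Finsupp.ext_iff, Fin.forall_fin_two]

theorem algebraMap_ne_zero_of_eval_ne_zero {P : MvPolynomial (Fin 2) ℚ} (x : Fin 2 → ℚ)
    (hP : MvPolynomial.eval x P ≠ 0) : algebraMap (MvPolynomial (Fin 2) ℚ) QQst P ≠ 0 := by
  refine (map_ne_zero_iff _ (IsFractionRing.injective _ QQst)).mpr ?_
  rintro rfl
  exact hP (map_zero _)

theorem tvar_ne_zero : tvar ≠ 0 :=
  algebraMap_ne_zero_of_eval_ne_zero 1 (by simp)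

theorem one_sub_svar_ne_zero : 1 - svar ≠ 0 := by
  have := algebraMap_ne_zero_of_eval_ne_zero 0 (P := 1 - MvPolynomial.X 0) (by simp)
  simpa [svar] using this

theorem one_sub_svar_mul_tvar_ne_zero : 1 - svar * tvar ≠ 0 := by
  have := algebraMap_ne_zero_of_eval_ne_zero 0
    (P := 1 - MvPolynomial.X 0 * MvPolynomial.X 1) (by simp)
  simpa [svar, tvar] using this

theorem one_sub_svar_mul_tvar_mul_Qlp_succ {l p : ℕ} (h : p ≤ l) :
    (1 - svar * tvar) * Qlp (l + 1) p = svar * Qlp l p := by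
  have := one_sub_svar_mul_tvar_ne_zero
  have := one_sub_svar_ne_zero
  rw [Qlp, Qlp, Nat.sub_add_comm h]
  field_simp
  ring

theorem tvar_sub_svar_mul_tvar_mul_Qlp_succ_succ (l p : ℕ) :
    (tvar - svar * tvar) * Qlp (l + 1) (p + 1) = svar * Qlp l p := by
  have := tvar_ne_zero
  have := one_sub_svar_mul_tvar_ne_zero
  have := one_sub_svar_ne_zero
  rw [Qlp, Qlp, Nat.add_sub_add_right, inv_pow, inv_pow]
  field_simp
  ring

theorem mul_Qlp_three_one :
    (1 - svar) * (1 - svar * tvar) * ((1 - svar * tvar) * (tvar - svar * tvar)) * Qlp 3 1 =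
      svar ^ 4 := by
  have := tvar_ne_zero
  have := one_sub_svar_mul_tvar_ne_zero
  have := one_sub_svar_ne_zero
  rw [Qlp]
  field_simp
  ring

noncomputable def Tdiag : MvPowerSeries (Fin 2) QQst :=
  fun e => if 1 ≤ e 1 ∧ e 0 = e 1 + 2 then (1 - svar * tvar) * Qlp (e 0) (e 1) else 0

theorem Tser_mul_C_sub_C_mul_X :
    Tser * (C (1 - svar * tvar) - C svar * X 0) = Tdiag := by
  rw [X_def]
  ext e
  rw [coeff_mul_C_sub_C_mul_monomial]
  simp only [Finsupp.le_iff_fin_two, Tser, Tdiag, coeff_apply, Finsupp.tsub_apply,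
    Finsupp.single_eq_same, Finsupp.single_eq_of_ne one_ne_zero, tsub_zero, zero_le, and_true]
  generalize e 0 = l, e 1 = p
  split_ifs <;> try first | omega | simp
  obtain ⟨m, rfl⟩ : ∃ m, l = m + 1 := ⟨l - 1, by omega⟩
  rw [Nat.add_sub_cancel, one_sub_svar_mul_tvar_mul_Qlp_succ (by omega), sub_self]

theorem Tdiag_mul_C_sub_C_mul_X_mul_X :
    Tdiag * (C (tvar - svar * tvar) - C svar * X 0 * X 1) =
      C ((1 - svar * tvar) * (tvar - svar * tvar) * Qlp 3 1) * X 0 ^ 3 * X 1 := by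
  rw [mul_assoc, mul_assoc, X_pow_eq, X_def, X_def 1, monomial_mul_monomial, one_mul,
    monomial_mul_monomial, one_mul]
  ext e
  rw [coeff_mul_C_sub_C_mul_monomial, coeff_C_mul, coeff_monomial]
  simp only [Finsupp.le_iff_fin_two, Finsupp.eq_iff_fin_two, Tdiag, coeff_apply,
    Finsupp.tsub_apply, Finsupp.add_apply, Finsupp.single_eq_same,
    Finsupp.single_eq_of_ne one_ne_zero, Finsupp.single_eq_of_ne zero_ne_one, add_zero, zero_add]
  generalize e 0 = l, e 1 = p
  split_ifs <;> try first | omega | simp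
  · obtain ⟨q, rfl⟩ : ∃ q, p = q + 1 := ⟨p - 1, by omega⟩
    obtain rfl : l = q + 2 + 1 := by omega
    rw [Nat.add_sub_cancel, Nat.add_sub_cancel]
    linear_combination (1 - svar * tvar) * tvar_sub_svar_mul_tvar_mul_Qlp_succ_succ (q + 2) q
  · obtain ⟨rfl, rfl⟩ : l = 3 ∧ p = 1 := by omega
    ring

/-- The four-variable generating function identity
`T·(1-s)(1-st)·((1-st) - su)·((t-st) - suv) = s⁴u³v`, i.e.
`T = s⁴u³v / ((1-s)(1-st)(1-st-su)(t-st-suv))`. -/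
theorem Tser_generating_function :
    Tser * (MvPowerSeries.C (σ := Fin 2) (R := QQst) ((1 - svar) * (1 - svar * tvar)) *
      ((MvPowerSeries.C (σ := Fin 2) (R := QQst) (1 - svar * tvar) -
          MvPowerSeries.C (σ := Fin 2) (R := QQst) svar * MvPowerSeries.X 0) *
        (MvPowerSeries.C (σ := Fin 2) (R := QQst) (tvar - svar * tvar) -
          MvPowerSeries.C (σ := Fin 2) (R := QQst) svar * MvPowerSeries.X 0 * MvPowerSeries.X 1))) =
    MvPowerSeries.C (σ := Fin 2) (R := QQst) (svar ^ 4) * MvPowerSeries.X 0 ^ 3 * MvPowerSeries.X 1 := by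
  rw [mul_left_comm, ← mul_assoc Tser, Tser_mul_C_sub_C_mul_X, Tdiag_mul_C_sub_C_mul_X_mul_X,
    ← mul_Qlp_three_one]
  simp only [map_mul]
  ring
end

section
/- Let K be a field of characteristic zero, S = K[x_1, …, x_ℓ], and let f ∈ S be a nonzero squarefree homogeneous polynomial of degree ≥ 1. Then for every integer i ≥ 1 there is an isomorphism of S-modules Ext^i_S(D(f), S) ≅ Ext^{i+2}_S(S/J_f, S). -/
open CategoryTheory MvPolynomial

/-- The `n`-th Ext group of the `R`-modules `M` and `N`. -/
noncomputable def ExtGrp (R : Type) [CommRing R] (M N : ModuleCat R) (n : ℕ) : ModuleCat R :=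
  ((Ext R (ModuleCat R) n).obj (Opposite.op M)).obj N

/-- The module of logarithmic derivations
`D(f) = {θ ∈ S^ℓ : Σ_i θ_i ∂f/∂x_i ∈ (f)}`. -/
noncomputable def Dlog (K : Type) [CommRing K] (ℓ : ℕ) (f : MvPolynomial (Fin ℓ) K) :
    Submodule (MvPolynomial (Fin ℓ) K) (Fin ℓ → MvPolynomial (Fin ℓ) K) :=
  Submodule.comap
    (∑ i : Fin ℓ, (LinearMap.toSpanSingleton (MvPolynomial (Fin ℓ) K)
      (MvPolynomial (Fin ℓ) K) (pderiv i f)).comp (LinearMap.proj i))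
    (Ideal.span {f})

/-- The Jacobian ideal `J_f = (∂f/∂x_1, …, ∂f/∂x_ℓ)`. -/
noncomputable def jacobianIdeal (K : Type) [CommRing K] (ℓ : ℕ)
    (f : MvPolynomial (Fin ℓ) K) : Ideal (MvPolynomial (Fin ℓ) K) :=
  Ideal.span (Set.range fun i => pderiv i f)

/-!
Euler's identity `Σ xᵢ ∂ᵢf = d·f` puts `f` into `J_f`, so `(θ, s) ↦ Σ θᵢ ∂ᵢf - s f` maps the
free module `S^ℓ ⊕ S` onto `J_f`. Its kernel is `D(f)`: since `f` is a non-zero-divisor, `s` is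
determined by `θ`, and `θ` occurs exactly when `Σ θᵢ ∂ᵢf ∈ (f)`. Dimension shifting along
`0 → D(f) → S^ℓ ⊕ S → J_f → 0` and `0 → J_f → S → S/J_f → 0`, whose middle terms are free, gives
`Ext^i(D(f), S) ≅ Ext^{i+1}(J_f, S) ≅ Ext^{i+2}(S/J_f, S)` for `i ≥ 1`.

Mathlib's `Ext` is computed from projective resolutions, so dimension shifting along
`0 → X₁ → P → X₃ → 0` is realised by splicing a projective resolution of `X₁` onto `P → X₃`.
-/

namespace CategoryTheory

variable {C : Type*} [Category* C] [Abelian C]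

namespace ProjectiveResolution

variable {X : C} (Q : ProjectiveResolution X)

/-- `Q.π.f 0` with its target `((single₀ C).obj X).X 0` replaced by `X`; the two are only
definitionally equal, which is not enough for rewriting or instance search. -/
noncomputable def ε : Q.complex.X 0 ⟶ X :=
  (ChainComplex.toSingle₀Equiv Q.complex X Q.π).1

@[simp]
lemma d_comp_ε : Q.complex.d 1 0 ≫ Q.ε = 0 :=
  (ChainComplex.toSingle₀Equiv Q.complex X Q.π).2

lemma exact_ε : (ShortComplex.mk _ _ Q.d_comp_ε).Exact := Q.exact₀

instance : Epi Q.ε := inferInstanceAs (Epi (Q.π.f 0))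

end ProjectiveResolution

namespace ShortComplex

lemma Exact.comp_mono_g {S : ShortComplex C} (hS : S.Exact) {X : C} (m : S.X₃ ⟶ X) [Mono m] :
    (ShortComplex.mk S.f (S.g ≫ m) (by rw [← Category.assoc, S.zero, Limits.zero_comp])).Exact :=
  (exact_iff_of_epi_of_isIso_of_mono (S₁ := S) (S₂ := ShortComplex.mk S.f (S.g ≫ m) _)
    { τ₁ := 𝟙 _, τ₂ := 𝟙 _, τ₃ := m }).1 hS

lemma Exact.epi_comp_f {S : ShortComplex C} (hS : S.Exact) {X : C} (e : X ⟶ S.X₁) [Epi e] :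
    (ShortComplex.mk (e ≫ S.f) S.g (by rw [Category.assoc, S.zero, Limits.comp_zero])).Exact :=
  (exact_iff_of_epi_of_isIso_of_mono (S₁ := ShortComplex.mk (e ≫ S.f) S.g _) (S₂ := S)
    { τ₁ := e, τ₂ := 𝟙 _, τ₃ := 𝟙 _ }).2 hS

namespace ShortExact

variable {S : ShortComplex C}

noncomputable def projectiveResolutionX₃ (hS : S.ShortExact) [Projective S.X₂]
    (Q : ProjectiveResolution S.X₁) : ProjectiveResolution S.X₃ where
  complex := Q.complex.augment (Q.ε ≫ S.f)
    (by rw [← Category.assoc, Q.d_comp_ε, Limits.zero_comp])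
  projective
    | 0 => (inferInstance : Projective S.X₂)
    | n + 1 => Q.projective n
  π := (ChainComplex.toSingle₀Equiv _ _).symm
    ⟨S.g, (Category.assoc _ _ _).trans ((congrArg (_ ≫ ·) S.zero).trans Limits.comp_zero)⟩
  quasiIso := ⟨fun n => by
    cases n with
    | zero =>
      rw [ChainComplex.quasiIsoAt₀_iff, ShortComplex.quasiIso_iff_of_zeros']
      -- the short complex in degree `0` is `Q₀ ⟶ X₂ ⟶ X₃` only up to identity morphisms
      · refine (exact_and_epi_g_iff_of_iso (S₂ := ShortComplex.mk (Q.ε ≫ S.f) S.g (by simp))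
          ?_).2 ⟨hS.exact.epi_comp_f Q.ε, hS.epi_g⟩
        exact isoMk (Iso.refl _) (Iso.refl _) (Iso.refl _)
          ((Category.id_comp _).trans (Category.comp_id _).symm)
          (by
            simp only [Iso.refl_hom]
            exact (Category.id_comp S.g).trans ((ChainComplex.toSingle₀Equiv_symm_apply_f_zero
              (C := Q.complex.augment (Q.ε ≫ S.f) _) (X := S.X₃) S.g _).symm.trans
              (Category.comp_id _).symm))
      all_goals rfl
    | succ n =>
      rw [quasiIsoAt_iff_exactAt' _ _ (ChainComplex.exactAt_succ_single_obj _ _),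
        HomologicalComplex.exactAt_iff' _ (n + 2) (n + 1) n (by simp) (by simp)]
      cases n with
      | zero => have := hS.mono_f; exact Q.exact_ε.comp_mono_g S.f
      | succ m => exact Q.exact_succ m⟩

variable (R : Type*) [Ring R] [Linear R C] [EnoughProjectives C]

/-- Above degree `0` the Hom complex of the spliced resolution is that of `Q` shifted by one,
so the two `homologyIsoSc'` meet definitionally. -/
noncomputable def extSuccSuccIso (hS : S.ShortExact) [Projective S.X₂] (Y : C) (n : ℕ) :
    ((Ext R C (n + 2)).obj (Opposite.op S.X₃)).obj Y ≅
      ((Ext R C (n + 1)).obj (Opposite.op S.X₁)).obj Y :=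
  let Q := ProjectiveResolution.of S.X₁
  (hS.projectiveResolutionX₃ Q).isoExt (n + 2) Y ≪≫
    HomologicalComplex.homologyIsoSc' _ (n + 1) (n + 2) (n + 3)
      (CochainComplex.prev_nat_succ _) (CochainComplex.next _ _) ≪≫
    (HomologicalComplex.homologyIsoSc' (Q.complex.linearYonedaObj R Y) n (n + 1) (n + 2)
      (CochainComplex.prev_nat_succ _) (CochainComplex.next _ _)).symm ≪≫
    (Q.isoExt (n + 1) Y).symm

end ShortExact

end ShortComplex

end CategoryTheory

section LogarithmicDerivations

variable {K : Type} [CommRing K] {ℓ : ℕ} (f : MvPolynomial (Fin ℓ) K)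

local notation "S" => MvPolynomial (Fin ℓ) K

noncomputable def gradientPairing : (Fin ℓ → S) →ₗ[S] S :=
  ∑ i : Fin ℓ, (LinearMap.toSpanSingleton S S (pderiv i f)).comp (LinearMap.proj i)

lemma gradientPairing_apply (θ : Fin ℓ → S) :
    gradientPairing f θ = ∑ i, θ i * pderiv i f := by
  simp [gradientPairing, LinearMap.sum_apply]

lemma mem_Dlog_iff {θ : Fin ℓ → S} : θ ∈ Dlog K ℓ f ↔ ∃ s, s * f = gradientPairing f θ :=
  Ideal.mem_span_singleton'

lemma gradientPairing_mem_jacobianIdeal (θ : Fin ℓ → S) :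
    gradientPairing f θ ∈ jacobianIdeal K ℓ f := by
  rw [gradientPairing_apply]
  exact Ideal.sum_mem _ fun i _ => Ideal.mul_mem_left _ _ (Ideal.subset_span ⟨i, rfl⟩)

lemma mem_jacobianIdeal_self_of_isHomogeneous {d : ℕ} (hf : f.IsHomogeneous d)
    (hd : IsUnit (d : K)) :
    f ∈ jacobianIdeal K ℓ f := by
  have euler : C (d : K) * f = gradientPairing f X := by
    rw [gradientPairing_apply, hf.sum_X_mul_pderiv, nsmul_eq_mul, map_natCast]
  obtain ⟨u, hu⟩ := hd
  have hf_eq : f = C (↑u⁻¹ : K) * gradientPairing f X := by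
    rw [← euler, ← mul_assoc, ← C_mul, ← hu, Units.inv_mul, C_1, one_mul]
  have h := Ideal.mul_mem_left _ (C (↑u⁻¹ : K)) (gradientPairing_mem_jacobianIdeal f X)
  rwa [← hf_eq] at h

variable {f}

noncomputable def toJacobianIdeal (hf : f ∈ jacobianIdeal K ℓ f) :
    ((Fin ℓ → S) × S) →ₗ[S] jacobianIdeal K ℓ f :=
  LinearMap.codRestrict _ ((gradientPairing f).coprod (-LinearMap.toSpanSingleton S S f))
    fun x => by
      simpa [sub_eq_add_neg] using
        sub_mem (gradientPairing_mem_jacobianIdeal f x.1) (Ideal.mul_mem_left _ x.2 hf)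

lemma toJacobianIdeal_apply_coe (hf : f ∈ jacobianIdeal K ℓ f) (x : (Fin ℓ → S) × S) :
    (toJacobianIdeal hf x : S) = gradientPairing f x.1 - x.2 * f := by
  simp [toJacobianIdeal, sub_eq_add_neg]

lemma toJacobianIdeal_surjective (hf : f ∈ jacobianIdeal K ℓ f) :
    Function.Surjective (toJacobianIdeal hf) := by
  rintro ⟨y, hy⟩
  obtain ⟨c, rfl⟩ := (Submodule.mem_span_range_iff_exists_fun S).mp hy
  exact ⟨(c, 0), Subtype.ext (by simp [toJacobianIdeal_apply_coe, gradientPairing_apply])⟩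

lemma mem_ker_toJacobianIdeal (hf : f ∈ jacobianIdeal K ℓ f) {x : (Fin ℓ → S) × S} :
    x ∈ LinearMap.ker (toJacobianIdeal hf) ↔ x.2 * f = gradientPairing f x.1 := by
  rw [LinearMap.mem_ker, ← Subtype.coe_inj, toJacobianIdeal_apply_coe, Submodule.coe_zero,
    sub_eq_zero, eq_comm]

noncomputable def kerToJacobianIdealEquivDlog (hf : f ∈ jacobianIdeal K ℓ f)
    (hf0 : f ∈ nonZeroDivisors S) : LinearMap.ker (toJacobianIdeal hf) ≃ₗ[S] Dlog K ℓ f :=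
  LinearEquiv.ofBijective
    (LinearMap.codRestrict _ ((LinearMap.fst S _ S).comp (LinearMap.ker _).subtype)
      fun x => (mem_Dlog_iff f).2 ⟨x.1.2, (mem_ker_toJacobianIdeal hf).1 x.2⟩)
    ⟨fun x y hxy => by
      have hθ : x.1.1 = y.1.1 := congrArg Subtype.val hxy
      have hs : x.1.2 = y.1.2 := (mul_cancel_right_mem_nonZeroDivisors hf0).1 <| by
        rw [(mem_ker_toJacobianIdeal hf).1 x.2, (mem_ker_toJacobianIdeal hf).1 y.2, hθ]
      exact Subtype.ext (Prod.ext hθ hs),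
    fun θ => by
      obtain ⟨s, hs⟩ := (mem_Dlog_iff f).1 θ.2
      exact ⟨⟨(θ, s), (mem_ker_toJacobianIdeal hf).2 hs⟩, rfl⟩⟩

end LogarithmicDerivations

theorem ext_Dlog_iso_ext_jacobian_general (K : Type) [Field K] [CharZero K] (ℓ : ℕ)
    (f : MvPolynomial (Fin ℓ) K)
    (hf0 : f ≠ 0) (hhom : ∃ d : ℕ, 1 ≤ d ∧ f.IsHomogeneous d) :
    ∀ i : ℕ, 1 ≤ i →
      Nonempty (ExtGrp (MvPolynomial (Fin ℓ) K)
          (ModuleCat.of (MvPolynomial (Fin ℓ) K) (Dlog K ℓ f))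
          (ModuleCat.of (MvPolynomial (Fin ℓ) K) (MvPolynomial (Fin ℓ) K)) i ≅
        ExtGrp (MvPolynomial (Fin ℓ) K)
          (ModuleCat.of (MvPolynomial (Fin ℓ) K)
            (MvPolynomial (Fin ℓ) K ⧸ jacobianIdeal K ℓ f))
          (ModuleCat.of (MvPolynomial (Fin ℓ) K) (MvPolynomial (Fin ℓ) K)) (i + 2)) := by
  intro i hi
  obtain ⟨n, rfl⟩ := Nat.exists_eq_add_of_le' hi
  obtain ⟨d, hd, hf⟩ := hhom
  have hfJ : f ∈ jacobianIdeal K ℓ f :=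
    mem_jacobianIdeal_self_of_isHomogeneous f hf (Nat.cast_ne_zero.2 (by omega)).isUnit
  have syzygies := LinearMap.shortExact_shortComplexKer (toJacobianIdeal_surjective hfJ)
  have quotient := ModuleCat.shortComplex_shortExact
    (ModuleCat.shortComplexOfCompEqZero _ _
      (LinearMap.exact_subtype_mkQ (jacobianIdeal K ℓ f)).linearMap_comp_eq_zero)
    (LinearMap.exact_subtype_mkQ _) (Submodule.injective_subtype _) (Submodule.mkQ_surjective _)
  exact ⟨((Ext _ _ (n + 1)).mapIso (kerToJacobianIdealEquivDlog hfJ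
      (mem_nonZeroDivisors_of_ne_zero hf0)).toModuleIso.op).app _ ≪≫
    (syzygies.extSuccSuccIso _ _ n).symm ≪≫ (quotient.extSuccSuccIso _ _ (n + 1)).symm⟩

/-- Let `K` be a field of characteristic zero, `S = K[x_1, …, x_ℓ]`, and `f ∈ S` a nonzero
squarefree homogeneous polynomial of degree `≥ 1`.  Then for every `i ≥ 1` there is an
isomorphism of `S`-modules `Ext^i_S(D(f), S) ≅ Ext^{i+2}_S(S/J_f, S)`. -/
theorem ext_Dlog_iso_ext_jacobian (K : Type) [Field K] [CharZero K] (ℓ : ℕ)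
    (f : MvPolynomial (Fin ℓ) K)
    (hf0 : f ≠ 0) (hsq : Squarefree f) (hhom : ∃ d : ℕ, 1 ≤ d ∧ f.IsHomogeneous d) :
    ∀ i : ℕ, 1 ≤ i →
      Nonempty (ExtGrp (MvPolynomial (Fin ℓ) K)
          (ModuleCat.of (MvPolynomial (Fin ℓ) K) (Dlog K ℓ f))
          (ModuleCat.of (MvPolynomial (Fin ℓ) K) (MvPolynomial (Fin ℓ) K)) i ≅
        ExtGrp (MvPolynomial (Fin ℓ) K)
          (ModuleCat.of (MvPolynomial (Fin ℓ) K)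
            (MvPolynomial (Fin ℓ) K ⧸ jacobianIdeal K ℓ f))
          (ModuleCat.of (MvPolynomial (Fin ℓ) K) (MvPolynomial (Fin ℓ) K)) (i + 2)) :=
  ext_Dlog_iso_ext_jacobian_general K ℓ f hf0 hhom
end
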